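/- Cumulative KL lower bound: let P_0, ..., P_M be probability distributions on a finite set (M ≥ 1, each P_{t+1} positive wherever P_t is positive), and suppose TV(P_M, P_0) ≥ Δ for some Δ ≥ 0. Then (1/M)·Σ_{t=0}^{M-1} KL(P_t‖P_{t+1}) ≥ 2·Δ²/M². -/

import Mathlib

/-!
Pinsker's inequality `TV(P, Q)² ≤ KL(P‖Q) / 2` follows from the pointwise bound
`3 (p - q)² ≤ 2 (p + 2q) (p log (p / q) + q - p)` by Cauchy–Schwarz with the probability
weights `(p + 2q) / 3`. Along the chain `P₀, …, P_M`, the triangle inequality gives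
`Δ ≤ Σ_t TV(P_t, P_{t+1})`, and Cauchy–Schwarz over the `M` steps turns this into
`Δ² ≤ M Σ_t TV(P_t, P_{t+1})² ≤ (M / 2) Σ_t KL(P_t‖P_{t+1})`.
-/

open Real Finset Set
open InformationTheory

lemma monotoneOn_add_one_mul_log_sub :
    MonotoneOn (fun t : ℝ ↦ (t + 1) * log t - 2 * (t - 1)) (Ioi 0) := by
  have hderiv : ∀ t ∈ Ioi (0 : ℝ),
      HasDerivAt (fun t : ℝ ↦ (t + 1) * log t - 2 * (t - 1)) (log t + t⁻¹ - 1) t := by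
    intro t (ht : 0 < t)
    have := (((hasDerivAt_id t).add_const 1).mul (hasDerivAt_log ht.ne')).sub
      (((hasDerivAt_id t).sub_const 1).const_mul 2)
    refine this.congr_deriv ?_
    simp only [id]
    field_simp
    ring
  refine monotoneOn_of_hasDerivWithinAt_nonneg (f' := fun t ↦ log t + t⁻¹ - 1) (convex_Ioi 0)
    (fun t ht ↦ (hderiv t ht).continuousAt.continuousWithinAt) ?_ ?_
  · simpa only [interior_Ioi] using fun t ht ↦ (hderiv t ht).hasDerivWithinAt
  · simp only [interior_Ioi]
    intro t (ht : 0 < t)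
    linarith [one_sub_inv_le_log_of_pos ht]

lemma three_mul_sub_one_sq_le_klFun {t : ℝ} (ht : 0 ≤ t) :
    3 * (t - 1) ^ 2 ≤ 2 * (t + 2) * klFun t := by
  set ψ : ℝ → ℝ := fun t ↦ 2 * (t + 2) * klFun t - 3 * (t - 1) ^ 2
  have hψ_cont : Continuous ψ := by fun_prop
  have hderiv : ∀ t, 0 < t → HasDerivAt ψ (4 * ((t + 1) * log t - 2 * (t - 1))) t := by
    intro t ht
    have := ((((hasDerivAt_id t).add_const 2).const_mul 2).mul (hasDerivAt_klFun ht.ne')).sub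
      (((hasDerivAt_id t).sub_const 1).pow 2 |>.const_mul 3)
    refine this.congr_deriv ?_
    simp only [klFun_apply, id]
    ring
  -- `ψ'` has the sign of `t - 1`, because `(t + 1) log t - 2 (t - 1)` increases and vanishes at 1.
  have hsign := monotoneOn_add_one_mul_log_sub
  have hmin : IsMinOn ψ (Ici 0) 1 := by
    refine isMinOn_Ici_of_deriv hψ_cont.continuousAt hψ_cont.continuousAt
      (fun t ht ↦ (hderiv t ht.1).differentiableAt.differentiableWithinAt)
      (fun t ht ↦ (hderiv t (zero_lt_one.trans ht)).differentiableAt.differentiableWithinAt)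
      (fun t ht ↦ ?_) (fun t ht ↦ ?_)
    · have := hsign ht.1 (mem_Ioi.2 one_pos) ht.2.le
      rw [(hderiv t ht.1).deriv]
      norm_num at this ⊢
      linarith
    · have := hsign (mem_Ioi.2 one_pos) (mem_Ioi.2 (zero_lt_one.trans ht)) (le_of_lt ht)
      rw [(hderiv t (zero_lt_one.trans ht)).deriv]
      norm_num at this ⊢
      linarith
  have : ψ 1 ≤ ψ t := hmin (mem_Ici.2 ht)
  simp only [ψ, klFun_one] at this
  linarith

lemma mul_klFun_div (p : ℝ) {q : ℝ} (hq : q ≠ 0) :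
    q * klFun (p / q) = p * log (p / q) + q - p := by
  rw [klFun_apply]
  field_simp

lemma mul_log_div_add_sub_nonneg {p q : ℝ} (hp : 0 ≤ p) (hq : 0 ≤ q) (hpq : 0 < p → 0 < q) :
    0 ≤ p * log (p / q) + q - p := by
  rcases hq.eq_or_lt with rfl | hq
  · simp [le_antisymm (not_lt.1 (mt hpq (lt_irrefl 0))) hp]
  · rw [← mul_klFun_div p hq.ne']
    exact mul_nonneg hq.le (klFun_nonneg (div_nonneg hp hq.le))

lemma three_mul_sub_sq_le_mul_log_div {p q : ℝ} (hp : 0 ≤ p) (hq : 0 ≤ q)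
    (hpq : 0 < p → 0 < q) :
    3 * (p - q) ^ 2 ≤ 2 * (p + 2 * q) * (p * log (p / q) + q - p) := by
  rcases hq.eq_or_lt with rfl | hq
  · simp [le_antisymm (not_lt.1 (mt hpq (lt_irrefl 0))) hp]
  · rw [← mul_klFun_div p hq.ne']
    calc 3 * (p - q) ^ 2 = q ^ 2 * (3 * (p / q - 1) ^ 2) := by field_simp
      _ ≤ q ^ 2 * (2 * (p / q + 2) * klFun (p / q)) :=
        mul_le_mul_of_nonneg_left (three_mul_sub_one_sq_le_klFun (div_nonneg hp hq.le))
          (sq_nonneg q)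
      _ = 2 * (p + 2 * q) * (q * klFun (p / q)) := by field_simp

section FiniteDistributions

variable {X : Type*} [Fintype X]

noncomputable def tvDist (P Q : X → ℝ) : ℝ := 1 / 2 * ∑ x, |P x - Q x|

noncomputable def klDivergence (P Q : X → ℝ) : ℝ := ∑ x, P x * log (P x / Q x)

lemma tvDist_le_sum_range (P : ℕ → X → ℝ) (n : ℕ) :
    tvDist (P n) (P 0) ≤ ∑ t ∈ range n, tvDist (P t) (P (t + 1)) := by
  unfold tvDist
  rw [← mul_sum, sum_comm]
  gcongr with x
  simpa only [dist_comm (P 0 x), Real.dist_eq] using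
    dist_le_range_sum_dist (fun t ↦ P t x) n

theorem sq_tvDist_le_klDivergence (P Q : X → ℝ) (hP : ∀ x, 0 ≤ P x) (hQ : ∀ x, 0 ≤ Q x)
    (hP_sum : ∑ x, P x = 1) (hQ_sum : ∑ x, Q x = 1) (hPQ : ∀ x, 0 < P x → 0 < Q x) :
    tvDist P Q ^ 2 ≤ klDivergence P Q / 2 := by
  have hcs : (∑ x, |P x - Q x|) ^ 2 ≤
      (∑ x, 2 * (P x * log (P x / Q x) + Q x - P x)) * ∑ x, (P x + 2 * Q x) / 3 := by
    refine sum_sq_le_sum_mul_sum_of_sq_le_mul _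
      (fun x _ ↦ mul_nonneg zero_le_two (mul_log_div_add_sub_nonneg (hP x) (hQ x) (hPQ x)))
      (fun x _ ↦ by linarith [hP x, hQ x]) (fun x _ ↦ ?_)
    rw [sq_abs]
    linarith [three_mul_sub_sq_le_mul_log_div (hP x) (hQ x) (hPQ x)]
  have hweights : ∑ x, (P x + 2 * Q x) / 3 = 1 := by
    rw [← sum_div, sum_add_distrib, ← mul_sum, hP_sum, hQ_sum]
    norm_num
  have hkl : ∑ x, 2 * (P x * log (P x / Q x) + Q x - P x) = 2 * klDivergence P Q := by
    rw [← mul_sum, sum_sub_distrib, sum_add_distrib, hP_sum, hQ_sum, add_sub_cancel_right]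
    rfl
  rw [hweights, hkl, mul_one] at hcs
  unfold tvDist
  linarith

end FiniteDistributions

theorem cumulative_kl_lower_bound_general {X : Type*} [Fintype X] (M : ℕ)
    (P : ℕ → X → ℝ)
    (hP : ∀ t ≤ M, ∀ x, 0 ≤ P t x) (hPsum : ∀ t ≤ M, ∑ x, P t x = 1)
    (habs : ∀ t < M, ∀ x, 0 < P t x → 0 < P (t + 1) x)
    (Δ : ℝ) (hΔ : 0 ≤ Δ)
    (hTV : Δ ≤ (1 / 2) * ∑ x, |P M x - P 0 x|) :
    2 * Δ ^ 2 / (M : ℝ) ^ 2 ≤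
      (1 / (M : ℝ)) * ∑ t ∈ Finset.range M,
        ∑ x, P t x * Real.log (P t x / P (t + 1) x) := by
  change _ ≤ 1 / (M : ℝ) * ∑ t ∈ range M, klDivergence (P t) (P (t + 1))
  have hchain : Δ ≤ ∑ t ∈ range M, tvDist (P t) (P (t + 1)) :=
    hTV.trans (tvDist_le_sum_range P M)
  have hpinsker : ∀ t ∈ range M,
      tvDist (P t) (P (t + 1)) ^ 2 ≤ klDivergence (P t) (P (t + 1)) / 2 := fun t ht ↦ by
    have ht := mem_range.1 ht
    exact sq_tvDist_le_klDivergence _ _ (hP t ht.le) (hP (t + 1) ht) (hPsum t ht.le)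
      (hPsum (t + 1) ht) (habs t ht)
  have hkey : 2 * Δ ^ 2 ≤ M * ∑ t ∈ range M, klDivergence (P t) (P (t + 1)) :=
    calc 2 * Δ ^ 2 ≤ 2 * (∑ t ∈ range M, tvDist (P t) (P (t + 1))) ^ 2 := by gcongr
      _ ≤ 2 * (M * ∑ t ∈ range M, tvDist (P t) (P (t + 1)) ^ 2) := by
        gcongr
        simpa using sq_sum_le_card_mul_sum_sq (s := range M)
      _ ≤ 2 * (M * ∑ t ∈ range M, klDivergence (P t) (P (t + 1)) / 2) := by
        gcongr with t ht
        exact hpinsker t ht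
      _ = M * ∑ t ∈ range M, klDivergence (P t) (P (t + 1)) := by rw [← sum_div]; ring
  obtain rfl | hM := M.eq_zero_or_pos
  · simp
  rw [div_le_iff₀ (by positivity)]
  calc 2 * Δ ^ 2 ≤ M * ∑ t ∈ range M, klDivergence (P t) (P (t + 1)) := hkey
    _ = (1 / M * ∑ t ∈ range M, klDivergence (P t) (P (t + 1))) * M ^ 2 := by field_simp

/-- Cumulative KL lower bound: if `TV(P_M, P_0) ≥ Δ ≥ 0`, `M ≥ 1`, and each
`P_{t+1}` is positive wherever `P_t` is, then
`(1/M) · Σ_{t<M} KL(P_t‖P_{t+1}) ≥ 2·Δ²/M²`. -/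
theorem cumulative_kl_lower_bound {X : Type*} [Fintype X] (M : ℕ) (hM : 1 ≤ M)
    (P : ℕ → X → ℝ)
    (hP : ∀ t ≤ M, ∀ x, 0 ≤ P t x) (hPsum : ∀ t ≤ M, ∑ x, P t x = 1)
    (habs : ∀ t < M, ∀ x, 0 < P t x → 0 < P (t + 1) x)
    (Δ : ℝ) (hΔ : 0 ≤ Δ)
    (hTV : Δ ≤ (1 / 2) * ∑ x, |P M x - P 0 x|) :
    2 * Δ ^ 2 / (M : ℝ) ^ 2 ≤
      (1 / (M : ℝ)) * ∑ t ∈ Finset.range M,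
        ∑ x, P t x * Real.log (P t x / P (t + 1) x) :=
  cumulative_kl_lower_bound_general M P hP hPsum habs Δ hΔ hTV
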